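/- For any N ≥ 1, the sum over all non-identity permutations σ in Sym(N) of e^{−β·d_C(e,σ)} (the Gershgorin radius of the Cayley distance kernel) equals e^{−βN}·∏_{k=0}^{N−1}(e^β + k) − 1. -/

import Mathlib

open Equiv

/-- Number of cycles (orbits, including fixed points) of a permutation. -/
def numCycles {N : ℕ} (σ : Perm (Fin N)) : ℕ :=
  (Finset.univ.filter fun x => σ x = x).card + σ.cycleType.card

/-- Cayley distance on `Sym(N)`: `d_C(σ₁,σ₂) = N − #cycles(σ₁⁻¹∘σ₂)`. -/
def cayleyDist {N : ℕ} (σ₁ σ₂ : Perm (Fin N)) : ℕ :=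
  N - numCycles (σ₁⁻¹ * σ₂)

/-- The Cayley distance kernel at inverse temperature `β` on `Sym(N)`. -/
noncomputable def cayleyKernel (N : ℕ) (β : ℝ) :
    Matrix (Perm (Fin N)) (Perm (Fin N)) ℝ :=
  Matrix.of fun σ₁ σ₂ => Real.exp (-β * (cayleyDist σ₁ σ₂ : ℝ))

/-! Since `d_C(e, σ) = N - #cycles(σ)`, the sum over all of `Sym(N)` is
`e^{-βN} ∑_σ (e^β)^{#cycles(σ)}`, and `∑_{σ ∈ Sym(n)} x^{#cycles(σ)} = x (x + 1) ⋯ (x + n - 1)`.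
For the latter write `σ ∈ Sym(n + 1)` as the pair `(σ 0, e)` with `e ∈ Sym(n)`
(`decomposeFin`). If `σ 0 = 0` then `0` is one extra cycle of `σ`. Otherwise
`swap 0 (σ 0) * σ` cuts `0` out of its cycle into a fixed point, which raises the number of
cycles by exactly one, so `σ` has as many cycles as `e`. Summing over `σ 0` gives the factor
`x + n`; removing the identity term `1` gives the Gershgorin radius. -/

open Finset

theorem Nat.Partition.card_parts_le {n : ℕ} (p : n.Partition) : Multiset.card p.parts ≤ n := by
  simpa [← p.parts_sum] using Multiset.card_nsmul_le_sum fun i hi => p.parts_pos hi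

namespace Equiv.Perm

variable {α : Type*} [Fintype α] [DecidableEq α]

theorem card_parts_partition (σ : Perm α) :
    Multiset.card σ.partition.parts
      = Fintype.card α - #σ.support + Multiset.card σ.cycleType := by
  rw [parts_partition, Multiset.card_add, Multiset.card_replicate, add_comm]

theorem Disjoint.card_parts_partition_mul {f g : Perm α} (h : f.Disjoint g) :
    Multiset.card (f * g).partition.parts + Fintype.card α
      = Multiset.card f.partition.parts + Multiset.card g.partition.parts := by
  have hfg : #f.support + #g.support ≤ Fintype.card α := by
    rw [← card_union_of_disjoint h.disjoint_support, ← h.support_mul]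
    exact card_le_univ _
  simp only [card_parts_partition, h.cycleType_mul, h.support_mul,
    card_union_of_disjoint h.disjoint_support, Multiset.card_add]
  omega

theorem IsCycle.card_parts_partition {c : Perm α} (hc : c.IsCycle) :
    Multiset.card c.partition.parts + #c.support = Fintype.card α + 1 := by
  have := card_le_univ c.support
  rw [Perm.card_parts_partition, hc.cycleType, Multiset.card_singleton]
  omega

theorem card_parts_partition_swap_mul_self {σ : Perm α} {x : α} (hx : σ x ≠ x) :
    Multiset.card (swap x (σ x) * σ).partition.parts = Multiset.card σ.partition.parts + 1 := by
  set c := σ.cycleOf x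
  set ρ := σ * c⁻¹
  have hcσ : c ∈ σ.cycleFactorsFinset :=
    cycleOf_mem_cycleFactorsFinset_iff.mpr (mem_support.mpr hx)
  have hc : c.IsCycle := isCycle_cycleOf σ hx
  have hcx : c x = σ x := cycleOf_apply_self σ x
  have hdisj : c.Disjoint ρ := (disjoint_mul_inv_of_mem_cycleFactorsFinset hcσ).symm
  have hσ : σ = c * ρ := by rw [hdisj.commute.eq, inv_mul_cancel_right]
  have hσρ := hdisj.card_parts_partition_mul
  have hcρ := hc.card_parts_partition
  rw [← hσ] at hσρ
  rw [← hcx] at hx ⊢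
  rw [show swap x (c x) * σ = swap x (c x) * c * ρ by rw [mul_assoc, ← hσ]]
  by_cases hccx : c (c x) = x
  · have hc2 : c = swap x (c x) := hc.eq_swap_of_apply_apply_eq_self hx hccx
    have hsupp : #c.support = 2 := by rw [hc2]; exact card_support_swap hx.symm
    have h1 : swap x (c x) * c = 1 := by nth_rewrite 2 [hc2]; exact swap_mul_self _ _
    rw [h1, one_mul]
    omega
  · have hc' := hc.swap_mul hx hccx
    have hsupp : (swap x (c x) * c).support = c.support \ {x} := support_swap_mul_eq c x hccx
    have hxc : x ∈ c.support := mem_support.mpr hx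
    have hdisj' : (swap x (c x) * c).Disjoint ρ :=
      hdisj.mono (hsupp ▸ sdiff_subset) subset_rfl
    have hc'ρ := hdisj'.card_parts_partition_mul
    have hc'card := hc'.card_parts_partition
    rw [hsupp, card_sdiff_of_subset (singleton_subset_iff.mpr hxc), card_singleton] at hc'card
    have := card_pos.mpr ⟨x, hxc⟩
    omega

theorem decomposeFin_symm_zero {n : ℕ} (e : Perm (Fin n)) :
    decomposeFin.symm (0, e) = e.extendDomain (finSuccAboveEquiv 0) := by
  refine Equiv.ext fun i => ?_
  cases i using Fin.cases with
  | zero => simp [extendDomain_apply_not_subtype]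
  | succ i =>
    have hi : (i.succ : Fin (n + 1)) = finSuccAboveEquiv 0 i := by simp [finSuccAboveEquiv_apply]
    rw [decomposeFin_symm_apply_succ, swap_self, refl_apply, hi, extendDomain_apply_image]
    simp [finSuccAboveEquiv_apply]

theorem swap_zero_mul_decomposeFin_symm {n : ℕ} (p : Fin (n + 1)) (e : Perm (Fin n)) :
    swap 0 p * decomposeFin.symm (p, e) = decomposeFin.symm (0, e) := by
  ext i
  cases i using Fin.cases <;> simp

end Equiv.Perm

open Perm

theorem numCycles_eq_card_parts_partition {N : ℕ} (σ : Perm (Fin N)) :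
    numCycles σ = Multiset.card σ.partition.parts := by
  have hfix : (univ.filter fun x => σ x = x) = σ.supportᶜ := by ext; simp
  rw [numCycles, hfix, card_compl, card_parts_partition]

theorem numCycles_le {N : ℕ} (σ : Perm (Fin N)) : numCycles σ ≤ N := by
  simpa [numCycles_eq_card_parts_partition] using σ.partition.card_parts_le

theorem numCycles_decomposeFin_symm_zero {n : ℕ} (e : Perm (Fin n)) :
    numCycles (decomposeFin.symm (0, e)) = numCycles e + 1 := by
  have := card_le_univ e.support
  simp only [numCycles_eq_card_parts_partition, card_parts_partition, decomposeFin_symm_zero,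
    cycleType_extendDomain, card_support_extend_domain, Fintype.card_fin] at this ⊢
  omega

theorem numCycles_decomposeFin_symm_of_ne_zero {n : ℕ} {p : Fin (n + 1)} (hp : p ≠ 0)
    (e : Perm (Fin n)) : numCycles (decomposeFin.symm (p, e)) = numCycles e := by
  have h := card_parts_partition_swap_mul_self (σ := decomposeFin.symm (p, e)) (x := 0)
  simp only [decomposeFin_symm_apply_zero, swap_zero_mul_decomposeFin_symm] at h
  have := numCycles_decomposeFin_symm_zero e
  simp only [numCycles_eq_card_parts_partition] at this ⊢
  omega

theorem sum_pow_numCycles {R : Type*} [CommSemiring R] (n : ℕ) (x : R) :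
    ∑ σ : Perm (Fin n), x ^ numCycles σ = ∏ k ∈ range n, (x + k) := by
  induction n with
  | zero => simp [Subsingleton.elim _ (1 : Perm (Fin 0)), numCycles]
  | succ n ih =>
    have hfiber (e : Perm (Fin n)) :
        ∑ p : Fin (n + 1), x ^ numCycles (decomposeFin.symm (p, e))
          = (x + n) * x ^ numCycles e := by
      rw [Fin.sum_univ_succ, numCycles_decomposeFin_symm_zero]
      simp only [numCycles_decomposeFin_symm_of_ne_zero (Fin.succ_ne_zero _), sum_const,
        card_univ, Fintype.card_fin, nsmul_eq_mul]
      ring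
    rw [← decomposeFin.symm.sum_comp, Fintype.sum_prod_type, sum_comm,
      sum_congr rfl fun e _ => hfiber e, ← mul_sum, ih, prod_range_succ, mul_comm]

theorem cayleyDist_self {N : ℕ} (σ : Perm (Fin N)) : cayleyDist σ σ = 0 := by
  simp [cayleyDist, numCycles]

theorem exp_neg_mul_cayleyDist_one_left {N : ℕ} (β : ℝ) (σ : Perm (Fin N)) :
    Real.exp (-β * cayleyDist 1 σ) = Real.exp (-β * N) * Real.exp β ^ numCycles σ := by
  rw [cayleyDist, inv_one, one_mul, Nat.cast_sub (numCycles_le σ), ← Real.exp_nat_mul,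
    ← Real.exp_add]
  ring_nf

theorem gershgorin_radius_cayleyKernel_general (N : ℕ) (β : ℝ) :
    ∑ σ ∈ Finset.univ.erase (1 : Perm (Fin N)),
        Real.exp (-β * (cayleyDist 1 σ : ℝ))
      = Real.exp (-β * N) * (∏ k ∈ Finset.range N, (Real.exp β + (k : ℝ))) - 1 := by
  rw [sum_erase_eq_sub (mem_univ 1), cayleyDist_self, Nat.cast_zero, mul_zero, Real.exp_zero]
  simp only [exp_neg_mul_cayleyDist_one_left, ← mul_sum, sum_pow_numCycles]

/-- The Gershgorin radius of the Cayley distance kernel: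
`∑_{σ ≠ e} e^{−β·d_C(e,σ)} = e^{−βN}·∏_{k=0}^{N−1}(e^β + k) − 1`. -/
theorem gershgorin_radius_cayleyKernel (N : ℕ) (hN : 1 ≤ N) (β : ℝ) :
    ∑ σ ∈ Finset.univ.erase (1 : Perm (Fin N)),
        Real.exp (-β * (cayleyDist 1 σ : ℝ))
      = Real.exp (-β * N) * (∏ k ∈ Finset.range N, (Real.exp β + (k : ℝ))) - 1 :=
  gershgorin_radius_cayleyKernel_general N β
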